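/- Let G be a deterministic regular tree grammar with bottom-up parser as above. For every nonterminal A and every tree x ∈ L(G|A), the parser on input x succeeds and returns exactly the pair (A, r̄) where r̄ is the unique rule sequence generating x from A. -/

import Mathlib

structure Rule (N : Type) (α : Type) where
  lhs : N
  sym : α
  rhs : List N
deriving DecidableEq

inductive RTree (α : Type) where
  | node : α → List (RTree α) → RTree α

def RTree.size {α : Type} : RTree α → Nat
  | .node _ ys => 1 + (ys.attach.map (fun y => RTree.size y.1)).sum
decreasing_by have := List.sizeOf_lt_of_mem y.2; simp only [RTree.node.sizeOf_spec]; omega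

def RTree.children {α : Type} : RTree α → List (RTree α)
  | .node _ ys => ys

def RTree.root {α : Type} : RTree α → α
  | .node x _ => x

def RTree.dfs {α : Type} : RTree α → List (RTree α)
  | .node x ys => (ys.attach.map (fun y => RTree.dfs y.1)).flatten ++ [.node x ys]
decreasing_by have := List.sizeOf_lt_of_mem y.2; simp only [RTree.node.sizeOf_spec]; omega

inductive GenList {N α : Type} (R : Set (Rule N α)) :
    List (Rule N α) → List N → List (RTree α) → Prop where
  | nil : GenList R [] [] []
  | step {r : Rule N α} {rs : List (Rule N α)} {stack : List N}
      {ys ts : List (RTree α)} :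
      r ∈ R →
      ys.length = r.rhs.length →
      GenList R rs (r.rhs ++ stack) (ys ++ ts) →
      GenList R (r :: rs) (r.lhs :: stack) (RTree.node r.sym ys :: ts)

def GenSeq {N α : Type} (R : Set (Rule N α)) (rs : List (Rule N α))
    (A : N) (t : RTree α) : Prop :=
  GenList R rs [A] [t]

def Lang {N α : Type} (R : Set (Rule N α)) (A : N) : Set (RTree α) :=
  {t | ∃ rs, GenSeq R rs A t}

def LangN {N α : Type} (R : Set (Rule N α)) (A : N) (n : Nat) : Set (RTree α) :=
  {t ∈ Lang R A | t.size ≤ n}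

def Deterministic {N α : Type} (R : Set (Rule N α)) : Prop :=
  ∀ r ∈ R, ∀ r' ∈ R, r.sym = r'.sym → r.rhs = r'.rhs → r = r'

def parse {N α : Type} [DecidableEq N] [DecidableEq α] (R : List (Rule N α)) :
    RTree α → Option (N × List (Rule N α))
  | RTree.node x ys => do
    let res ← ys.attach.mapM (fun y => parse R y.1)
    match R.find? (fun r => r.sym == x && r.rhs == res.map Prod.fst) with
    | some r => some (r.lhs, r :: (res.map Prod.snd).flatten)
    | none => none
decreasing_by have := List.sizeOf_lt_of_mem y.2; simp only [RTree.node.sizeOf_spec]; omega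

/-
Induction on the stack-based derivation: whenever rules `rs` derive the forest `ys` from the
stack `Bs`, the parser maps `ys` to the list of pairs whose first components are `Bs` and whose
second components concatenate to `rs`. At a node derived by a rule `r`, the children parse to
`r.rhs`, and determinism makes `r` the only rule with that root symbol and right-hand side, so the
parser's lookup finds exactly `r`. Uniqueness of the generating sequence follows because the
parser is a function.
-/

theorem List.length_eq_of_mapM_eq_some {β γ : Type*} {f : β → Option γ} :
    ∀ {l : List β} {res : List γ}, l.mapM f = some res → res.length = l.length
  | [], res, h => by simp_all
  | a :: l, res, h => by
    simp only [List.mapM_cons, Option.bind_eq_bind, Option.bind_eq_some_iff, Option.pure_def,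
      Option.some.injEq] at h
    obtain ⟨b, -, bs, hbs, rfl⟩ := h
    simp [length_eq_of_mapM_eq_some hbs]

theorem Deterministic.find?_eq_some {N α : Type} [DecidableEq N] [DecidableEq α]
    {R : List (Rule N α)} (hdet : Deterministic {r | r ∈ R}) {r : Rule N α} (hr : r ∈ R) :
    R.find? (fun r' => r'.sym == r.sym && r'.rhs == r.rhs) = some r := by
  obtain ⟨r', hfind⟩ := Option.isSome_iff_exists.mp <|
    (List.find?_isSome (p := fun r' => r'.sym == r.sym && r'.rhs == r.rhs)).mpr ⟨r, hr, by simp⟩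
  have hmatch := List.find?_some hfind
  simp only [Bool.and_eq_true, beq_iff_eq] at hmatch
  rw [hfind, hdet r' (List.mem_of_find?_eq_some hfind) r hr hmatch.1 hmatch.2]

theorem parse_node_of_mapM_eq_some {N α : Type} [DecidableEq N] [DecidableEq α]
    {R : List (Rule N α)} (hdet : Deterministic {r | r ∈ R}) {r : Rule N α} (hr : r ∈ R)
    {ys : List (RTree α)} {res : List (N × List (Rule N α))}
    (hres : ys.mapM (parse R) = some res) (hrhs : res.map Prod.fst = r.rhs) :
    parse R (.node r.sym ys) = some (r.lhs, r :: (res.map Prod.snd).flatten) := by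
  rw [parse, List.mapM_subtype (g := parse R) (fun _ _ => rfl), List.unattach_attach, hres,
    Option.bind_eq_bind, Option.bind_some, hrhs, hdet.find?_eq_some hr]

theorem GenList.mapM_parse_eq_some {N α : Type} [DecidableEq N] [DecidableEq α]
    {R : List (Rule N α)} (hdet : Deterministic {r | r ∈ R}) {rs : List (Rule N α)}
    {Bs : List N} {ys : List (RTree α)} (h : GenList {r | r ∈ R} rs Bs ys) :
    ∃ res, ys.mapM (parse R) = some res ∧ res.map Prod.fst = Bs ∧
      (res.map Prod.snd).flatten = rs := by
  induction h with
  | nil => exact ⟨[], rfl, rfl, rfl⟩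
  | @step r rs stack ys ts hr hlen _ ih =>
    obtain ⟨res, hres, hfst, hsnd⟩ := ih
    simp only [List.mapM_append, Option.bind_eq_bind, Option.bind_eq_some_iff, Option.pure_def,
      Option.some.injEq] at hres
    obtain ⟨resYs, hresYs, resTs, hresTs, rfl⟩ := hres
    rw [List.map_append] at hfst
    obtain ⟨hrhs, hstack⟩ := List.append_inj hfst <| by
      simp [List.length_eq_of_mapM_eq_some hresYs, hlen]
    refine ⟨(r.lhs, r :: (resYs.map Prod.snd).flatten) :: resTs, ?_, by simp [hstack], ?_⟩
    · rw [List.mapM_cons, parse_node_of_mapM_eq_some hdet hr hresYs hrhs, hresTs]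
      rfl
    · simpa using hsnd

theorem GenSeq.parse_eq {N α : Type} [DecidableEq N] [DecidableEq α]
    {R : List (Rule N α)} (hdet : Deterministic {r | r ∈ R}) {rs : List (Rule N α)} {A : N}
    {t : RTree α} (h : GenSeq {r | r ∈ R} rs A t) : parse R t = some (A, rs) := by
  obtain ⟨res, hres, hfst, hsnd⟩ := GenList.mapM_parse_eq_some hdet h
  simp only [List.mapM_cons, List.mapM_nil, Option.bind_eq_bind, Option.bind_eq_some_iff,
    Option.pure_def, Option.some.injEq] at hres
  obtain ⟨p, hp, _, rfl, rfl⟩ := hres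
  simp only [List.map_cons, List.map_nil, List.cons.injEq, and_true, List.flatten_cons,
    List.flatten_nil, List.append_nil] at hfst hsnd
  rw [hp, ← hfst, ← hsnd]

theorem stmt5 {N alpha : Type} [DecidableEq N] [DecidableEq alpha]
    (R : List (Rule N alpha)) (hdet : Deterministic {r | r ∈ R})
    (A : N) (t : RTree alpha) (h : t ∈ Lang {r | r ∈ R} A) :
    ∃ rs : List (Rule N alpha), parse R t = some (A, rs) ∧
      GenSeq {r | r ∈ R} rs A t ∧
      ∀ rs' : List (Rule N alpha), GenSeq {r | r ∈ R} rs' A t → rs' = rs := by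
  obtain ⟨rs, hrs⟩ := h
  refine ⟨rs, hrs.parse_eq hdet, hrs, fun rs' hrs' => ?_⟩
  simpa using (hrs'.parse_eq hdet).symm.trans (hrs.parse_eq hdet)
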